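/- Let G and H be connected graphs with n(G) ≥ 2. Then every resolving set of the corona product G ⊙ H has cardinality at least n(G) · dim(H), where dim(H) is the metric dimension of H. Consequently dim(G ⊙ H) ≥ n(G) · dim(H). -/
import Mathlib

open SimpleGraph

/-- Path graph on `Fin n` with `i` adjacent to `i+1`. -/
def pathG (n : ℕ) : SimpleGraph (Fin n) :=
  SimpleGraph.fromRel (fun i j => (i : ℕ) + 1 = (j : ℕ))

/-- Cycle graph on `Fin n` (vertices in cyclic order). -/
def cycleG (n : ℕ) : SimpleGraph (Fin n) :=
  SimpleGraph.fromRel (fun i j => (i : ℕ) + 1 = (j : ℕ) ∨ ((i : ℕ) = n - 1 ∧ (j : ℕ) = 0))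

/-- `S` is a resolving set of `G`. -/
def resolvingSet {V : Type*} (G : SimpleGraph V) (S : Set V) : Prop :=
  ∀ x y : V, x ≠ y → ∃ z ∈ S, G.dist x z ≠ G.dist y z

/-- `S` is a locating set of `G`. -/
def locatingSet {V : Type*} (G : SimpleGraph V) (S : Set V) : Prop :=
  ∀ u v : V, u ∉ S → v ∉ S → u ≠ v → G.neighborSet u ∩ S ≠ G.neighborSet v ∩ S

/-- `S` is a strictly locating set of `G`. -/
def strictlyLocatingSet {V : Type*} (G : SimpleGraph V) (S : Set V) : Prop :=
  locatingSet G S ∧ ∀ u : V, u ∉ S → G.neighborSet u ∩ S ≠ S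

/-- Corona product `G ⊙ H`: vertex `Sum.inl a` is a vertex of `G`, and
`Sum.inr (i, h)` is the vertex `h` of the `i`-th copy of `H`. -/
def corona {α β : Type*} (G : SimpleGraph α) (H : SimpleGraph β) :
    SimpleGraph (α ⊕ α × β) :=
  SimpleGraph.fromRel (fun x y =>
    match x, y with
    | Sum.inl a, Sum.inl b => G.Adj a b
    | Sum.inl a, Sum.inr p => a = p.1
    | Sum.inr p, Sum.inr q => p.1 = q.1 ∧ H.Adj p.2 q.2
    | _, _ => False)

/-- `K₁ ⊙ H`: the graph `H` together with one universal vertex `none`. -/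
def cone {β : Type*} (H : SimpleGraph β) : SimpleGraph (Option β) :=
  SimpleGraph.fromRel (fun x y =>
    match x, y with
    | some a, some b => H.Adj a b
    | none, some _ => True
    | _, _ => False)

/-- The metric dimension of a graph: minimum cardinality of a resolving set. -/
noncomputable def metricDim {V : Type*} [Fintype V] (G : SimpleGraph V) : ℕ :=
  sInf {n : ℕ | ∃ S : Set V, S.ncard = n ∧ resolvingSet G S}

section Aux

variable {α β : Type*} (G : SimpleGraph α) (H : SimpleGraph β)

lemma corona_adj_inl_inl {a b : α} :
    (corona G H).Adj (Sum.inl a) (Sum.inl b) ↔ G.Adj a b := by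
  rw [corona, SimpleGraph.fromRel_adj]
  constructor
  · rintro ⟨-, h | h⟩
    · exact h
    · exact h.symm
  · intro h
    exact ⟨by simp [h.ne], Or.inl h⟩

lemma corona_adj_inr_inl {a : α} {x : β} :
    (corona G H).Adj (Sum.inr (a, x)) (Sum.inl a) := by
  rw [corona, SimpleGraph.fromRel_adj]
  exact ⟨by simp, Or.inr rfl⟩

lemma corona_adj_inr_inr {a : α} {x w : β} :
    (corona G H).Adj (Sum.inr (a, x)) (Sum.inr (a, w)) ↔ H.Adj x w := by
  rw [corona, SimpleGraph.fromRel_adj]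
  constructor
  · rintro ⟨-, ⟨-, h⟩ | ⟨-, h⟩⟩
    · exact h
    · exact h.symm
  · intro h
    exact ⟨by simp [h.ne], Or.inl ⟨rfl, h⟩⟩

lemma corona_adj_inr_elim {a : α} {x : β} {u : α ⊕ α × β}
    (h : (corona G H).Adj (Sum.inr (a, x)) u) :
    u = Sum.inl a ∨ ∃ x', H.Adj x x' ∧ u = Sum.inr (a, x') := by
  rw [corona, SimpleGraph.fromRel_adj] at h
  obtain ⟨hne, h | h⟩ := h
  · match u, h with
    | Sum.inr (b, y), ⟨h1, h2⟩ =>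
      exact Or.inr ⟨y, h2, by simp only at h1; rw [h1]⟩
  · match u, h with
    | Sum.inl b, h => exact Or.inl (by simp only at h; rw [h])
    | Sum.inr (b, y), ⟨h1, h2⟩ =>
      exact Or.inr ⟨y, h2.symm, by simp only at h1; rw [← h1]⟩

lemma corona_connected (hG : G.Connected) : (corona G H).Connected := by
  have key : ∀ a b : α, (corona G H).Reachable (Sum.inl a) (Sum.inl b) := fun a b =>
    SimpleGraph.Reachable.map
      (⟨Sum.inl, fun {a b} h => (corona_adj_inl_inl G H).mpr h⟩ : G →g corona G H)
      (hG.preconnected a b)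
  have key2 : ∀ v : α ⊕ α × β, ∃ a : α, (corona G H).Reachable v (Sum.inl a) := by
    rintro (a | ⟨a, x⟩)
    · exact ⟨a, SimpleGraph.Reachable.refl _⟩
    · exact ⟨a, (corona_adj_inr_inl G H).reachable⟩
  have hne : Nonempty α := hG.nonempty
  rw [SimpleGraph.connected_iff]
  refine ⟨fun u v => ?_, ⟨Sum.inl hne.some⟩⟩
  obtain ⟨a, ha⟩ := key2 u
  obtain ⟨b, hb⟩ := key2 v
  exact ha.trans ((key a b).trans hb.symm)

lemma walk_through_center (a : α) :
    ∀ {u z : α ⊕ α × β} (w : (corona G H).Walk u z) (x : β), u = Sum.inr (a, x) →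
      (∀ y : β, z ≠ Sum.inr (a, y)) →
      1 + (corona G H).dist (Sum.inl a) z ≤ w.length := by
  intro u z w
  induction w with
  | nil =>
    intro x hu hz
    exact absurd hu (hz x)
  | @cons u v z h w ih =>
    intro x hu hz
    subst hu
    rcases corona_adj_inr_elim G H h with h1 | ⟨x', hx', h1⟩
    · subst h1
      have := SimpleGraph.dist_le w
      simp only [SimpleGraph.Walk.length_cons]
      omega
    · subst h1
      have := ih x' rfl hz
      simp only [SimpleGraph.Walk.length_cons]
      omega

lemma dist_inr_out (hG : G.Connected) (a : α) (x : β) {z : α ⊕ α × β}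
    (hz : ∀ y : β, z ≠ Sum.inr (a, y)) :
    (corona G H).dist (Sum.inr (a, x)) z = 1 + (corona G H).dist (Sum.inl a) z := by
  have hc := corona_connected G H hG
  apply le_antisymm
  · obtain ⟨w, hw⟩ := hc.exists_walk_length_eq_dist (Sum.inl a) z
    have := SimpleGraph.dist_le (SimpleGraph.Walk.cons (corona_adj_inr_inl G H (a := a) (x := x)) w)
    simp only [SimpleGraph.Walk.length_cons, hw] at this
    omega
  · obtain ⟨w, hw⟩ := hc.exists_walk_length_eq_dist (Sum.inr (a, x)) z
    rw [← hw]
    exact walk_through_center G H a w x rfl hz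

open Classical in
lemma dist_inr_inr (hG : G.Connected) (a : α) (x w : β) :
    (corona G H).dist (Sum.inr (a, x)) (Sum.inr (a, w)) =
      if x = w then 0 else if H.Adj x w then 1 else 2 := by
  have hc := corona_connected G H hG
  split_ifs with h1 h2
  · subst h1; exact SimpleGraph.dist_self
  · exact SimpleGraph.dist_eq_one_iff_adj.mpr ((corona_adj_inr_inr G H).mpr h2)
  · apply le_antisymm
    · have := SimpleGraph.dist_le
        (SimpleGraph.Walk.cons (corona_adj_inr_inl G H (a := a) (x := x))
          (SimpleGraph.Walk.cons ((corona_adj_inr_inl G H (a := a) (x := w)).symm)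
            SimpleGraph.Walk.nil))
      simpa using this
    · have hne : (Sum.inr (a, x) : α ⊕ α × β) ≠ Sum.inr (a, w) := by simp [h1]
      have h0 : (corona G H).dist (Sum.inr (a, x)) (Sum.inr (a, w)) ≠ 0 := by
        exact fun hcon => hne (hc.dist_eq_zero_iff.mp hcon)
      have hone : (corona G H).dist (Sum.inr (a, x)) (Sum.inr (a, w)) ≠ 1 := by
        intro hcon
        exact h2 ((corona_adj_inr_inr G H).mp (SimpleGraph.dist_eq_one_iff_adj.mp hcon))
      omega

lemma copy_resolving (hG : G.Connected) (hH : H.Connected)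
    {S : Set (α ⊕ α × β)} (hS : resolvingSet (corona G H) S) (a : α) :
    resolvingSet H {h : β | Sum.inr (a, h) ∈ S} := by
  intro x y hxy
  obtain ⟨z, hzS, hz⟩ := hS (Sum.inr (a, x)) (Sum.inr (a, y)) (by simp [hxy])
  by_cases hcase : ∀ y' : β, z ≠ Sum.inr (a, y')
  · exact absurd (by rw [dist_inr_out G H hG a x hcase, dist_inr_out G H hG a y hcase]) hz
  · push_neg at hcase
    obtain ⟨w, rfl⟩ := hcase
    refine ⟨w, hzS, fun heq => hz ?_⟩
    rw [dist_inr_inr G H hG, dist_inr_inr G H hG]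
    have h1 : (x = w) = (y = w) := by
      rw [← hH.dist_eq_zero_iff, ← hH.dist_eq_zero_iff, heq]
    have h2 : (H.Adj x w) = (H.Adj y w) := by
      rw [← SimpleGraph.dist_eq_one_iff_adj, ← SimpleGraph.dist_eq_one_iff_adj, heq]
    rw [h1, h2]

end Aux

theorem stmt14 {α β : Type*} [Fintype α] [Fintype β]
    (G : SimpleGraph α) (H : SimpleGraph β) (hG : G.Connected) (hH : H.Connected)
    (hcard : 2 ≤ Fintype.card α) :
    (∀ S : Set (α ⊕ α × β), resolvingSet (corona G H) S →
      Fintype.card α * metricDim H ≤ S.ncard) ∧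
    Fintype.card α * metricDim H ≤ metricDim (corona G H) := by
  classical
  have main : ∀ S : Set (α ⊕ α × β), resolvingSet (corona G H) S →
      Fintype.card α * metricDim H ≤ S.ncard := by
    intro S hS
    have hdim : ∀ a : α, metricDim H ≤ {h : β | Sum.inr (a, h) ∈ S}.ncard := fun a =>
      Nat.sInf_le ⟨_, rfl, copy_resolving G H hG hH hS a⟩
    set T : Finset (α × β) := Finset.univ.filter (fun p => Sum.inr p ∈ S) with hT
    have hTle : T.card ≤ S.ncard := by
      rw [Set.ncard_eq_toFinset_card' S, ← Finset.card_image_of_injective T (Sum.inr_injective (α := α) (β := α × β))]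
      apply Finset.card_le_card
      intro u hu
      simp only [Finset.mem_image, hT, Finset.mem_filter, Finset.mem_univ, true_and] at hu
      obtain ⟨p, hp, rfl⟩ := hu
      simpa using hp
    have hfib : T.card = ∑ a : α, ({h : β | Sum.inr (a, h) ∈ S}.ncard) := by
      rw [Finset.card_eq_sum_card_fiberwise (f := Prod.fst) (t := Finset.univ)
        (fun p _ => Finset.mem_univ _)]
      refine Finset.sum_congr rfl (fun a _ => ?_)
      rw [Set.ncard_eq_toFinset_card']
      apply Finset.card_bij (fun p _ => p.2)
      · intro p hp
        simp only [hT, Finset.mem_filter, Finset.mem_univ, true_and] at hp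
        obtain ⟨hp1, hp2⟩ := hp
        simp only [Set.mem_toFinset, Set.mem_setOf_eq]
        rw [show (a, p.2) = p by rw [← hp2]]
        exact hp1
      · intro p hp q hq hpq
        simp only [hT, Finset.mem_filter, Finset.mem_univ, true_and] at hp hq
        have : p = (a, p.2) := by rw [← hp.2]
        have hq' : q = (a, q.2) := by rw [← hq.2]
        rw [this, hq', hpq]
      · intro h hh
        simp only [Set.mem_toFinset, Set.mem_setOf_eq] at hh
        exact ⟨(a, h), by simp [hT, hh], rfl⟩
    calc Fintype.card α * metricDim H = ∑ _a : α, metricDim H := by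
          simp [Finset.sum_const, mul_comm]
      _ ≤ ∑ a : α, ({h : β | Sum.inr (a, h) ∈ S}.ncard) :=
          Finset.sum_le_sum (fun a _ => hdim a)
      _ = T.card := hfib.symm
      _ ≤ S.ncard := hTle
  refine ⟨main, ?_⟩
  have hc := corona_connected G H hG
  have huniv : resolvingSet (corona G H) Set.univ := by
    intro x y hxy
    refine ⟨x, Set.mem_univ x, ?_⟩
    rw [SimpleGraph.dist_self]
    intro hcon
    exact hxy ((hc.dist_eq_zero_iff.mp hcon.symm).symm)
  have hne : {n : ℕ | ∃ S : Set (α ⊕ α × β), S.ncard = n ∧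
      resolvingSet (corona G H) S}.Nonempty := ⟨_, Set.univ, rfl, huniv⟩
  obtain ⟨S, hScard, hSres⟩ := Nat.sInf_mem hne
  have h := main S hSres
  rw [hScard] at h
  exact h
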